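/- arXiv:1412.7349 — 2 statements merged into one kernel-verified Lean document; each statement's English description precedes it below -/
import Mathlib

section
/- Fix 0 < δ < d. The functions F_n(x) = (1 - x²/R_n²)^{(n-1)/2}, defined for n large enough that R_n > d, converge uniformly on [δ, d] to x ↦ exp(-π e x²) as n → ∞. -/
open Real Filter

/-- The radius of the `n`-dimensional Euclidean ball of unit volume. -/
noncomputable def unitBallRadius (n : ℕ) : ℝ :=
  (Real.Gamma ((n : ℝ) / 2 + 1)) ^ ((1 : ℝ) / n) / Real.sqrt π

/-!
Write `(1 - t / r) ^ m = exp (m * log (1 - t / r))`. Since `log (1 - u) = -u + O(u²)`, the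
exponent is `-(m / r) t + O((m / r) t² / r)` uniformly for bounded `t`, so the powers converge
uniformly to `exp (-c t)` as soon as `1 / r → 0` and `m / r → c`. For `m = (n - 1) / 2` and
`r = Rₙ²` this gives `c = π e`, because `n / Rₙ² → 2 π e`: by the duplication formula
`Γ(n/2 + 1)²` lies between `n! √π / 2ⁿ` and `n` times that, and `log n! = n log n - n + o(n)`
by Stirling.
-/

open Set Bornology
open scoped Nat Topology

theorem Continuous.comp_tendstoUniformlyOn_of_isBounded {ι α E γ : Type*}
    [SeminormedAddCommGroup E] [ProperSpace E] [UniformSpace γ] {l : Filter ι}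
    {F : ι → α → E} {f : α → E} {s : Set α} {g : E → γ} (hg : Continuous g)
    (hf : IsBounded (f '' s)) (h : TendstoUniformlyOn F f l s) :
    TendstoUniformlyOn (fun i x => g (F i x)) (fun x => g (f x)) l s := by
  obtain ⟨K, hK⟩ := isBounded_iff_forall_norm_le.mp hf
  have hfK : ∀ x ∈ s, ‖f x‖ ≤ K := fun x hx => hK _ (mem_image_of_mem f hx)
  refine ((isCompact_closedBall (0 : E) (K + 1)).uniformContinuousOn_of_continuous
    hg.continuousOn).comp_tendstoUniformlyOn_eventually ?_ ?_ h
  · filter_upwards [Metric.tendstoUniformlyOn_iff.mp h 1 one_pos] with i hi x hx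
    rw [mem_closedBall_zero_iff]
    have := dist_triangle (F i x) (f x) 0
    rw [dist_zero_right, dist_zero_right, dist_comm] at this
    linarith [hfK x hx, hi x hx]
  · exact fun x hx => mem_closedBall_zero_iff.mpr ((hfK x hx).trans (by linarith))

theorem abs_log_one_sub_add_le {u : ℝ} (hu : |u| ≤ 1 / 2) :
    |log (1 - u) + u| ≤ 2 * u ^ 2 := by
  have h := abs_log_sub_add_sum_range_le (hu.trans_lt (by norm_num)) 1
  simp only [Finset.sum_range_one, zero_add, pow_one, Nat.cast_zero, div_one] at h
  calc |log (1 - u) + u| = |u + log (1 - u)| := by rw [add_comm]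
    _ ≤ |u| ^ 2 / (1 - |u|) := h
    _ ≤ 2 * u ^ 2 := by
        rw [div_le_iff₀ (by linarith), sq_abs]
        nlinarith [sq_nonneg u]

section OneSubDivRpow

variable {ι : Type*} {l : Filter ι} {m r : ι → ℝ} {c : ℝ} {s : Set ℝ}

theorem eventually_forall_abs_div_lt (hs : IsBounded s)
    (hr : Tendsto (fun i => (r i)⁻¹) l (𝓝 0)) {ε : ℝ} (hε : 0 < ε) :
    ∀ᶠ i in l, ∀ t ∈ s, |t / r i| < ε := by
  obtain ⟨K, hK⟩ := isBounded_iff_forall_norm_le.mp hs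
  filter_upwards [(hr.abs.mul_const K).eventually (gt_mem_nhds (by simpa using hε))] with i hi t ht
  rw [div_eq_mul_inv, abs_mul, mul_comm]
  exact (mul_le_mul_of_nonneg_left (hK t ht) (abs_nonneg _)).trans_lt hi

theorem tendstoUniformlyOn_mul_log_one_sub_div (hs : IsBounded s)
    (hr : Tendsto (fun i => (r i)⁻¹) l (𝓝 0)) (hm : Tendsto (fun i => m i / r i) l (𝓝 c)) :
    TendstoUniformlyOn (fun i t => m i * log (1 - t / r i)) (fun t => -c * t) l s := by
  obtain ⟨K, hK⟩ := isBounded_iff_forall_norm_le.mp hs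
  have herr : Tendsto (fun i => 2 * (|m i / r i| * K ^ 2 * |(r i)⁻¹|) + |m i / r i - c| * K) l
      (𝓝 0) := by
    simpa using ((hm.abs.mul_const (K ^ 2)).mul hr.abs).const_mul 2
      |>.add ((hm.sub_const c).abs.mul_const K)
  rw [Metric.tendstoUniformlyOn_iff]
  intro ε hε
  filter_upwards [herr.eventually (gt_mem_nhds hε),
    eventually_forall_abs_div_lt hs hr one_half_pos] with i hi hsmall t ht
  have hmu : |m i| * (t / r i) ^ 2 = |m i / r i| * |t| ^ 2 * |(r i)⁻¹| := by
    rw [abs_div, abs_inv, div_pow, sq_abs, ← sq_abs (r i)]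
    ring
  calc dist (-c * t) (m i * log (1 - t / r i))
      = |(m i / r i - c) * t - m i * (log (1 - t / r i) + t / r i)| := by
        rw [Real.dist_eq]; ring_nf
    _ ≤ |m i / r i - c| * |t| + |m i| * (2 * (t / r i) ^ 2) := by
        grw [abs_sub, abs_mul, abs_mul, abs_log_one_sub_add_le (hsmall t ht).le]
    _ ≤ 2 * (|m i / r i| * K ^ 2 * |(r i)⁻¹|) + |m i / r i - c| * K := by
        rw [add_comm, mul_left_comm, hmu]
        gcongr <;> exact hK t ht
    _ < ε := hi

theorem tendstoUniformlyOn_one_sub_div_rpow (hs : IsBounded s)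
    (hr : Tendsto (fun i => (r i)⁻¹) l (𝓝 0)) (hm : Tendsto (fun i => m i / r i) l (𝓝 c)) :
    TendstoUniformlyOn (fun i t => (1 - t / r i) ^ m i) (fun t => exp (-c * t)) l s := by
  refine (continuous_exp.comp_tendstoUniformlyOn_of_isBounded
    ((lipschitzWith_smul (-c)).isBounded_image hs)
    (tendstoUniformlyOn_mul_log_one_sub_div hs hr hm)).congr ?_
  filter_upwards [eventually_forall_abs_div_lt hs hr one_pos] with i hsmall t ht
  dsimp only
  rw [rpow_def_of_pos (by linarith [le_abs_self (t / r i), hsmall t ht]), mul_comm]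

end OneSubDivRpow

theorem tendsto_log_natCast_div_self : Tendsto (fun n : ℕ => log n / n) atTop (𝓝 0) :=
  isLittleO_log_id_atTop.tendsto_div_nhds_zero.comp tendsto_natCast_atTop_atTop

theorem tendsto_log_factorial_div_sub_log :
    Tendsto (fun n : ℕ => log n ! / n - log n) atTop (𝓝 (-1)) := by
  have hstirling : Tendsto (fun n : ℕ => log (Stirling.stirlingSeq n) / n) atTop (𝓝 0) :=
    ((continuousAt_log (sqrt_pos.mpr pi_pos).ne').tendsto.comp
      Stirling.tendsto_stirlingSeq_sqrt_pi).div_atTop tendsto_natCast_atTop_atTop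
  have hlog2 : Tendsto (fun n : ℕ => log (2 * n) / (2 * n)) atTop (𝓝 0) :=
    isLittleO_log_id_atTop.tendsto_div_nhds_zero.comp
      (tendsto_natCast_atTop_atTop.const_mul_atTop two_pos)
  have hlim := (hstirling.add hlog2).add_const (-1)
  rw [add_zero, zero_add] at hlim
  refine hlim.congr' ?_
  filter_upwards [eventually_ne_atTop 0] with n hn
  have hform := Stirling.log_stirlingSeq_formula n
  rw [log_div (by positivity) (exp_ne_zero 1), log_exp] at hform
  rw [hform]
  field_simp
  ring

theorem Gamma_half_add_one_sq_mem_Icc {n : ℕ} (hn : 3 ≤ n) :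
    Gamma (n / 2 + 1) ^ 2 ∈ Icc (n ! * √π / 2 ^ n) (n * (n ! * √π / 2 ^ n)) := by
  have hn' : (3 : ℝ) ≤ n := by exact_mod_cast hn
  set a := Gamma (n / 2 + 1 / 2)
  set b := Gamma (n / 2 + 1)
  have ha : 0 < a := Gamma_pos_of_pos (by positivity)
  have hb : 0 < b := Gamma_pos_of_pos (by positivity)
  have hdup : a * b = n ! * √π / 2 ^ n := by
    have h := Gamma_mul_Gamma_add_half_of_pos (s := n / 2 + 1 / 2) (by positivity)
    rw [show n / 2 + 1 / 2 + 1 / 2 = (n : ℝ) / 2 + 1 by ring,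
      show 2 * ((n : ℝ) / 2 + 1 / 2) = n + 1 by ring, Gamma_nat_eq_factorial,
      show 1 - ((n : ℝ) + 1) = -n by ring, rpow_neg zero_le_two, rpow_natCast] at h
    rw [h, div_eq_mul_inv]
    ring
  have hab : a ≤ b := Gamma_strictMonoOn_Ici.monotoneOn (by simp only [mem_Ici]; linarith)
    (by simp only [mem_Ici]; linarith) (by linarith)
  have hba : b ≤ n * a := by
    calc b ≤ Gamma (n / 2 + 1 / 2 + 1) := Gamma_strictMonoOn_Ici.monotoneOn
          (by simp only [mem_Ici]; linarith) (by simp only [mem_Ici]; linarith) (by linarith)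
      _ = (n / 2 + 1 / 2) * a := Gamma_add_one (by positivity)
      _ ≤ n * a := by gcongr; linarith
  rw [← hdup, sq]
  constructor <;> nlinarith

theorem tendsto_two_mul_log_Gamma_half_add_one_div_sub_log :
    Tendsto (fun n : ℕ => 2 * log (Gamma (n / 2 + 1)) / n - log n) atTop
      (𝓝 (-1 - log 2)) := by
  have hlower : Tendsto (fun n : ℕ => log n ! / n - log n - log 2 + log √π / n) atTop
      (𝓝 (-1 - log 2)) := by
    simpa using (tendsto_log_factorial_div_sub_log.sub_const (log 2)).add
      (tendsto_const_nhds.div_atTop tendsto_natCast_atTop_atTop)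
  have hupper : Tendsto (fun n : ℕ => log n ! / n - log n - log 2 + log √π / n + log n / n)
      atTop (𝓝 (-1 - log 2)) := by
    simpa using hlower.add tendsto_log_natCast_div_self
  have hbounds : ∀ᶠ n : ℕ in atTop,
      log n ! + log √π - n * log 2 ≤ 2 * log (Gamma (n / 2 + 1)) ∧
        2 * log (Gamma (n / 2 + 1)) ≤ log n + (log n ! + log √π - n * log 2) := by
    filter_upwards [eventually_ge_atTop 3] with n hn
    have hP : log (n ! * √π / 2 ^ n) = log n ! + log √π - n * log 2 := by
      rw [log_div (by positivity) (by positivity), log_mul (by positivity) (by positivity),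
        log_pow]
    obtain ⟨hlo, hhi⟩ := Gamma_half_add_one_sq_mem_Icc hn
    have hlo' := log_le_log (by positivity) hlo
    have hhi' := log_le_log (by positivity) hhi
    rw [log_pow, hP] at hlo'
    rw [log_pow, log_mul (by positivity) (by positivity), hP] at hhi'
    push_cast at hlo' hhi'
    exact ⟨hlo', hhi'⟩
  refine tendsto_of_tendsto_of_tendsto_of_le_of_le' hlower hupper ?_ ?_
  · filter_upwards [hbounds, eventually_gt_atTop 0] with n hbd hn
    have h := div_le_div_of_nonneg_right hbd.1 (Nat.cast_nonneg n)
    rw [sub_div, add_div, mul_div_cancel_left₀ _ (by positivity)] at h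
    linarith
  · filter_upwards [hbounds, eventually_gt_atTop 0] with n hbd hn
    have h := div_le_div_of_nonneg_right hbd.2 (Nat.cast_nonneg n)
    rw [add_div, sub_div, add_div, mul_div_cancel_left₀ _ (by positivity)] at h
    linarith

theorem unitBallRadius_sq (n : ℕ) :
    unitBallRadius n ^ 2 = exp (2 * log (Gamma (n / 2 + 1)) / n) / π := by
  have hΓ : 0 < Gamma (n / 2 + 1) := Gamma_pos_of_pos (by positivity)
  rw [unitBallRadius, div_pow, sq_sqrt pi_pos.le, ← rpow_natCast, ← rpow_mul hΓ.le,
    rpow_def_of_pos hΓ, Nat.cast_ofNat]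
  ring_nf

theorem tendsto_natCast_div_unitBallRadius_sq :
    Tendsto (fun n : ℕ => n / unitBallRadius n ^ 2) atTop (𝓝 (2 * π * exp 1)) := by
  have h := ((continuous_exp.tendsto _).comp
    tendsto_two_mul_log_Gamma_half_add_one_div_sub_log.neg).const_mul π
  rw [neg_sub, sub_neg_eq_add, exp_add, exp_log two_pos, ← mul_assoc, mul_comm π 2] at h
  refine h.congr' ?_
  filter_upwards [eventually_gt_atTop 0] with n hn
  rw [unitBallRadius_sq, Function.comp_apply, neg_sub, exp_sub, exp_log (by positivity)]
  field_simp

theorem tendstoUniformlyOn_slab_density_general (δ d : ℝ) :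
    TendstoUniformlyOn
      (fun (n : ℕ) (x : ℝ) => (1 - x ^ 2 / unitBallRadius n ^ 2) ^ (((n : ℝ) - 1) / 2))
      (fun x => Real.exp (-(π * Real.exp 1) * x ^ 2))
      atTop (Set.Icc δ d) := by
  have hR := tendsto_natCast_div_unitBallRadius_sq
  have hr : Tendsto (fun n : ℕ => (unitBallRadius n ^ 2)⁻¹) atTop (𝓝 0) := by
    have h := hR.mul tendsto_inv_atTop_nhds_zero_nat
    rw [mul_zero] at h
    refine h.congr' ?_
    filter_upwards [eventually_ne_atTop 0] with n hn
    field_simp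
  have hm : Tendsto (fun n : ℕ => ((n : ℝ) - 1) / 2 / unitBallRadius n ^ 2) atTop
      (𝓝 (π * exp 1)) := by
    have h := (hR.sub hr).div_const 2
    rw [sub_zero, show 2 * π * exp 1 / 2 = π * exp 1 by ring] at h
    exact h.congr fun n => by ring
  have hs : IsBounded ((· ^ 2) '' Icc δ d) := (isCompact_Icc.image (continuous_pow 2)).isBounded
  exact ((tendstoUniformlyOn_one_sub_div_rpow hs hr hm).comp (· ^ 2)).mono
    (subset_preimage_image _ _)

/-- For `0 < δ < d`, the functions `x ↦ (1 - x²/Rₙ²)^((n-1)/2)` converge uniformly on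
`[δ, d]` to `x ↦ exp (-π e x²)` as `n → ∞`. -/
theorem tendstoUniformlyOn_slab_density (δ d : ℝ) (hδ : 0 < δ) (hδd : δ < d) :
    TendstoUniformlyOn
      (fun (n : ℕ) (x : ℝ) => (1 - x ^ 2 / unitBallRadius n ^ 2) ^ (((n : ℝ) - 1) / 2))
      (fun x => Real.exp (-(π * Real.exp 1) * x ^ 2))
      atTop (Set.Icc δ d) :=
  tendstoUniformlyOn_slab_density_general δ d
end

section
/- For every ε ∈ (0, 1/2) there exists D = D(ε) > 0 and N such that for all n ≥ N: if S_n ⊂ ℝ^n is the origin-centered ball of unit volume and A, B ⊆ S_n are compact convex sets each of Lebesgue measure at least ε, then dist(A, B) ≤ D. -/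
open Real Filter MeasureTheory

/-- The infimum of distances between points of `A` and points of `B`. -/
noncomputable def setDist {n : ℕ} (A B : Set (EuclideanSpace ℝ (Fin n))) : ℝ :=
  sInf {d | ∃ x ∈ A, ∃ y ∈ B, d = dist x y}

/-!
Let `x ∈ A`, `y ∈ B` be a closest pair. By convexity the hyperplanes through `x` and `y`
orthogonal to `y - x` separate `A` from `B`, so if `‖y - x‖ > 2d` one of the two sets lies in
a cap `{w ∈ S_n | d ≤ ⟪u, w⟫}` with `‖u‖ = 1`. That cap lies in the ball around `d • u` of
radius `√(R_n² - d²) ≤ R_n exp (-d² / (2 R_n²))`, so its volume is at most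
`exp (-n d² / (2 R_n²))`. The cube `[-1/2, 1/2]ⁿ` has volume one and lies in the ball of
radius `√n / 2`, so `R_n ≤ √n / 2` and the cap has volume at most `exp (-2 d²)`, which is
`ε² < ε` for `d = √(-log ε)`.
-/

open Metric Module
open scoped RealInnerProductSpace

section InnerProductSpace

variable {F : Type*} [NormedAddCommGroup F] [InnerProductSpace ℝ F]

theorem real_inner_sub_nonpos_of_isMinOn_dist {K : Set F} (hK : Convex ℝ K) {p x : F}
    (hx : x ∈ K) (hmin : IsMinOn (dist p) K x) {z : F} (hz : z ∈ K) :
    ⟪p - x, z - x⟫ ≤ 0 :=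
  (norm_eq_iInf_iff_real_inner_le_zero hK hx).1
    (by simpa only [dist_eq_norm] using (hmin.iInf_eq hx).symm) z hz

theorem exists_cap_of_isMinOn_dist {A B : Set F} (hA : Convex ℝ A) (hB : Convex ℝ B)
    {x y : F} (hx : x ∈ A) (hy : y ∈ B)
    (hmin : IsMinOn (fun q : F × F ↦ dist q.1 q.2) (A ×ˢ B) (x, y))
    {d : ℝ} (hd : 0 ≤ d) (hdist : 2 * d < dist x y) :
    ∃ u : F, ‖u‖ = 1 ∧
      ((∀ z ∈ A, d ≤ ⟪u, z⟫) ∨ ∀ w ∈ B, d ≤ ⟪u, w⟫) := by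
  set v := y - x
  set r := ‖v‖
  have hr : 2 * d < r := by rwa [dist_eq_norm'] at hdist
  have hr0 : 0 < r := by linarith
  have hA_sep : ∀ z ∈ A, ⟪v, z⟫ ≤ ⟪v, x⟫ := fun z hz ↦ by
    have := real_inner_sub_nonpos_of_isMinOn_dist (p := y) hA hx
      (isMinOn_iff.2 fun z hz ↦ by
        simpa only [dist_comm y] using isMinOn_iff.1 hmin _ (Set.mk_mem_prod hz hy)) hz
    rwa [inner_sub_right, sub_nonpos] at this
  have hB_sep : ∀ w ∈ B, ⟪v, y⟫ ≤ ⟪v, w⟫ := fun w hw ↦ by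
    have := real_inner_sub_nonpos_of_isMinOn_dist hB hy
      (fun w hw ↦ hmin (Set.mk_mem_prod hx hw)) hw
    rwa [← neg_sub, inner_neg_left, inner_sub_right, neg_nonpos, sub_nonneg] at this
  have hxy : ⟪v, y⟫ - ⟪v, x⟫ = r ^ 2 := by
    rw [← inner_sub_right, real_inner_self_eq_norm_sq]
  have hu : ‖r⁻¹ • v‖ = 1 := by
    rw [norm_smul, norm_inv, norm_norm, inv_mul_cancel₀ hr0.ne']
  by_cases hy_far : d * r ≤ ⟪v, y⟫
  · refine ⟨r⁻¹ • v, hu, Or.inr fun w hw ↦ ?_⟩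
    rw [real_inner_smul_left, le_inv_mul_iff₀ hr0]
    linarith [hB_sep w hw]
  · refine ⟨-(r⁻¹ • v), by rwa [norm_neg], Or.inl fun z hz ↦ ?_⟩
    rw [inner_neg_left, real_inner_smul_left, le_neg, inv_mul_le_iff₀ hr0]
    nlinarith [hA_sep z hz]

theorem subset_closedBall_of_le_inner {C : Set F} {R d : ℝ} (hC : C ⊆ closedBall 0 R)
    {u : F} (hu : ‖u‖ = 1) (hd : 0 ≤ d) (hcap : ∀ w ∈ C, d ≤ ⟪u, w⟫) :
    C ⊆ closedBall (d • u) (exp (-(d / R) ^ 2 / 2) * R) := by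
  intro w hw
  have hwR : ‖w‖ ≤ R := by simpa using hC hw
  have hdw := hcap w hw
  have hsq : ‖w - d • u‖ ^ 2 ≤ R ^ 2 - d ^ 2 := by
    rw [norm_sub_sq_real, real_inner_smul_right, real_inner_comm, norm_smul, norm_of_nonneg hd,
      hu]
    nlinarith [norm_nonneg w]
  have hdR : R ^ 2 * (d / R) ^ 2 ≤ d ^ 2 := by
    rcases eq_or_ne R 0 with rfl | hR
    · simp [sq_nonneg]
    · rw [div_pow, mul_div_cancel₀ _ (pow_ne_zero 2 hR)]
  have hexp : R ^ 2 - d ^ 2 ≤ (exp (-(d / R) ^ 2 / 2) * R) ^ 2 := by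
    have hsq_exp : exp (-(d / R) ^ 2 / 2) ^ 2 = exp (-(d / R) ^ 2) := by
      rw [← exp_nat_mul]; ring_nf
    rw [mul_pow, hsq_exp]
    nlinarith [mul_le_mul_of_nonneg_left (add_one_le_exp (-(d / R) ^ 2)) (sq_nonneg R)]
  rw [mem_closedBall, dist_eq_norm]
  exact le_of_pow_le_pow_left₀ two_ne_zero (by positivity [(norm_nonneg w).trans hwR])
    (hsq.trans hexp)

variable [MeasurableSpace F] [BorelSpace F] [FiniteDimensional ℝ F]

theorem measure_le_of_le_inner (μ : Measure F) [μ.IsAddHaarMeasure] {C : Set F} {R d : ℝ}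
    (hR : 0 ≤ R) (hC : C ⊆ closedBall 0 R) {u : F} (hu : ‖u‖ = 1) (hd : 0 ≤ d)
    (hcap : ∀ w ∈ C, d ≤ ⟪u, w⟫) :
    μ C ≤ ENNReal.ofReal (exp (-finrank ℝ F * (d / R) ^ 2 / 2)) * μ (closedBall 0 R) := by
  calc μ C ≤ μ (closedBall (d • u) (exp (-(d / R) ^ 2 / 2) * R)) :=
        measure_mono (subset_closedBall_of_le_inner hC hu hd hcap)
    _ = _ := by
      rw [Measure.addHaar_closedBall_mul μ _ (exp_pos _).le hR, ← exp_nat_mul]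
      ring_nf

end InnerProductSpace

theorem le_of_addHaar_closedBall_le {F : Type*} [NormedAddCommGroup F] [NormedSpace ℝ F]
    [MeasurableSpace F] [BorelSpace F] [FiniteDimensional ℝ F] [Nontrivial F]
    (μ : Measure F) [μ.IsAddHaarMeasure] {x y : F} {r s : ℝ} (hr : 0 ≤ r) (hs : 0 ≤ s)
    (h : μ (closedBall x r) ≤ μ (closedBall y s)) : r ≤ s := by
  rwa [Measure.addHaar_closedBall' μ x hr, Measure.addHaar_closedBall' μ y hs,
    ENNReal.mul_le_mul_iff_left (measure_closedBall_pos μ 0 one_pos).ne'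
      measure_closedBall_lt_top.ne, ENNReal.ofReal_le_ofReal_iff (by positivity),
    pow_le_pow_iff_left₀ hr hs finrank_pos.ne'] at h

theorem unitBallRadius_pos (n : ℕ) : 0 < unitBallRadius n := by
  unfold unitBallRadius
  positivity

theorem volume_closedBall_unitBallRadius {n : ℕ} (hn : n ≠ 0) :
    volume (closedBall (0 : EuclideanSpace ℝ (Fin n)) (unitBallRadius n)) = 1 := by
  have : Nonempty (Fin n) := ⟨⟨0, Nat.pos_of_ne_zero hn⟩⟩
  have hΓ := Real.Gamma_pos_of_pos (s := (n : ℝ) / 2 + 1) (by positivity)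
  have hR := unitBallRadius_pos n
  rw [EuclideanSpace.volume_closedBall, Fintype.card_fin,
    ← ENNReal.ofReal_pow hR.le, ← ENNReal.ofReal_mul (by positivity),
    unitBallRadius, div_pow, one_div, rpow_inv_natCast_pow hΓ.le hn]
  field_simp
  exact ENNReal.ofReal_one

theorem unitBallRadius_le {n : ℕ} (hn : n ≠ 0) : unitBallRadius n ≤ √n / 2 := by
  have : Nonempty (Fin n) := ⟨⟨0, Nat.pos_of_ne_zero hn⟩⟩
  set Q : Set (EuclideanSpace ℝ (Fin n)) :=
    WithLp.ofLp ⁻¹' Set.Icc (fun _ ↦ -1 / 2) (fun _ ↦ 1 / 2)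
  have hQ : volume Q = 1 := by
    rw [(PiLp.volume_preserving_ofLp _).measure_preimage measurableSet_Icc.nullMeasurableSet,
      Real.volume_Icc_pi]
    norm_num
  have hQ_ball : Q ⊆ closedBall 0 (√n / 2) := by
    intro w hw
    rw [mem_closedBall_zero_iff]
    refine le_of_pow_le_pow_left₀ two_ne_zero (by positivity) ?_
    rw [EuclideanSpace.norm_sq_eq, div_pow, sq_sqrt n.cast_nonneg]
    calc ∑ i, ‖w i‖ ^ 2 ≤ ∑ i : Fin n, (1 / 2 : ℝ) ^ 2 := by
          gcongr with i
          exact abs_le.2 ⟨le_of_eq_of_le (by norm_num) (hw.1 i), hw.2 i⟩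
      _ = n / 2 ^ 2 := by
          simp only [Finset.sum_const, Finset.card_univ, Fintype.card_fin, nsmul_eq_mul]; ring
  refine le_of_addHaar_closedBall_le volume (x := (0 : EuclideanSpace ℝ (Fin n))) (y := 0)
    (unitBallRadius_pos n).le (by positivity) ?_
  rw [volume_closedBall_unitBallRadius hn, ← hQ]
  exact measure_mono hQ_ball

theorem volume_le_ofReal_exp_of_le_inner {n : ℕ} (hn : n ≠ 0)
    {C : Set (EuclideanSpace ℝ (Fin n))} (hC : C ⊆ closedBall 0 (unitBallRadius n))
    {u : EuclideanSpace ℝ (Fin n)} (hu : ‖u‖ = 1) {d : ℝ} (hd : 0 ≤ d)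
    (hcap : ∀ w ∈ C, d ≤ ⟪u, w⟫) :
    volume C ≤ ENNReal.ofReal (exp (-2 * d ^ 2)) := by
  set R := unitBallRadius n
  have hR := unitBallRadius_pos n
  have h4R : 4 * R ^ 2 ≤ n := by
    nlinarith [unitBallRadius_le hn, sq_sqrt (n.cast_nonneg (α := ℝ))]
  have hdR : (d / R) ^ 2 * R ^ 2 = d ^ 2 := by
    rw [div_pow, div_mul_cancel₀ _ (pow_ne_zero 2 hR.ne')]
  calc volume C
      ≤ ENNReal.ofReal (exp (-n * (d / R) ^ 2 / 2)) *
          volume (closedBall (0 : EuclideanSpace ℝ (Fin n)) R) := by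
        simpa using measure_le_of_le_inner volume hR.le hC hu hd hcap
    _ ≤ ENNReal.ofReal (exp (-2 * d ^ 2)) := by
        rw [volume_closedBall_unitBallRadius hn, mul_one]
        gcongr
        nlinarith [sq_nonneg (d / R)]

theorem setDist_le_dist {n : ℕ} {A B : Set (EuclideanSpace ℝ (Fin n))}
    {x y : EuclideanSpace ℝ (Fin n)} (hx : x ∈ A) (hy : y ∈ B) : setDist A B ≤ dist x y :=
  csInf_le ⟨0, by rintro _ ⟨a, -, b, -, rfl⟩; exact dist_nonneg⟩ ⟨x, hx, y, hy, rfl⟩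

/-- For every `ε ∈ (0, 1/2)` there is a constant `D` and an `N` such that for all `n ≥ N`,
any two compact convex subsets of the origin-centered unit-volume ball in `ℝⁿ`, each of
Lebesgue measure at least `ε`, are at distance at most `D` from one another. -/
theorem dist_le_of_convex_in_ball (ε : ℝ) (hε : ε ∈ Set.Ioo (0 : ℝ) (1 / 2)) :
    ∃ D > 0, ∃ N : ℕ, ∀ n ≥ N, ∀ A B : Set (EuclideanSpace ℝ (Fin n)),
      A ⊆ Metric.closedBall 0 (unitBallRadius n) →
      B ⊆ Metric.closedBall 0 (unitBallRadius n) →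
      IsCompact A → IsCompact B → Convex ℝ A → Convex ℝ B →
      ENNReal.ofReal ε ≤ volume A → ENNReal.ofReal ε ≤ volume B →
      setDist A B ≤ D := by
  obtain ⟨hε0, hε1⟩ := hε
  set d := √(-log ε)
  have hlog : log ε < 0 := log_neg hε0 (by linarith)
  have hd : 0 < d := sqrt_pos.2 (neg_pos.2 hlog)
  have hcap_small : exp (-2 * d ^ 2) < ε := by
    rw [sq_sqrt (neg_pos.2 hlog).le, show -2 * -log ε = log ε + log ε by ring, exp_add,
      exp_log hε0]
    nlinarith
  refine ⟨2 * d, by positivity, 1, fun n hn A B hAR hBR hA hB hAc hBc hvA hvB ↦ ?_⟩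
  have no_cap : ∀ C ⊆ closedBall 0 (unitBallRadius n), ENNReal.ofReal ε ≤ volume C →
      ∀ u : EuclideanSpace ℝ (Fin n), ‖u‖ = 1 → ¬∀ w ∈ C, d ≤ ⟪u, w⟫ :=
    fun C hC hvC u hu hcap ↦ hcap_small.not_ge <|
      (ENNReal.ofReal_le_ofReal_iff (exp_pos _).le).1 <|
        hvC.trans (volume_le_ofReal_exp_of_le_inner (by omega) hC hu hd.le hcap)
  have nonempty {C : Set (EuclideanSpace ℝ (Fin n))} (hvC : ENNReal.ofReal ε ≤ volume C) :
      C.Nonempty :=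
    nonempty_of_measure_ne_zero ((ENNReal.ofReal_pos.2 hε0).trans_le hvC).ne'
  obtain ⟨⟨x, y⟩, ⟨hx, hy⟩, hmin⟩ := (hA.prod hB).exists_isMinOn
    ((nonempty hvA).prod (nonempty hvB)) (continuous_fst.dist continuous_snd).continuousOn
  refine (setDist_le_dist hx hy).trans (not_lt.1 fun hfar ↦ ?_)
  obtain ⟨u, hu, hA_cap | hB_cap⟩ := exists_cap_of_isMinOn_dist hAc hBc hx hy hmin hd.le hfar
  exacts [no_cap A hAR hvA u hu hA_cap, no_cap B hBR hvB u hu hB_cap]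
end
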